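/- Let n be a nonnegative integer and let ω : (0,∞) → (0,∞) be an increasing function for which there exist q < n+1 and C_q > 0 with ω(st) ≤ C_q s^q ω(t) for all s ≥ 1, t > 0. Then there is a constant C' such that for all δ ∈ (0,1): ∫_δ^1 ω(t) t^{−n−2} dt ≤ C' ω(δ) δ^{−n−1}. -/

import Mathlib

open MeasureTheory Metric Set Filter Topology

noncomputable section

/-- Euclidean space `ℝ^d`. -/
abbrev Euc (d : ℕ) : Type := EuclideanSpace ℝ (Fin d)

/-- `K` is an even function. -/
def IsEvenFun {d : ℕ} (K : Euc d → ℝ) : Prop := ∀ x, K (-x) = K x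

/-- `K` is positively homogeneous of degree `-d`. -/
def HomogNegD (d : ℕ) (K : Euc d → ℝ) : Prop :=
  ∀ t : ℝ, 0 < t → ∀ x : Euc d, x ≠ 0 → K (t • x) = t ^ (-(d : ℝ)) * K x

/-- `K` has zero integral over the unit sphere with respect to the
`(d-1)`-dimensional Hausdorff measure. -/
def ZeroSphereInt (d : ℕ) (K : Euc d → ℝ) : Prop :=
  ∫ x in Metric.sphere (0 : Euc d) 1, K x ∂(μH[(d : ℝ) - 1]) = 0

/-- Calderón–Zygmund kernel of class `C^m`. -/
def IsCZKernel (d m : ℕ) (K : Euc d → ℝ) : Prop :=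
  ContDiffOn ℝ m K {(0 : Euc d)}ᶜ ∧ HomogNegD d K ∧ ZeroSphereInt d K

/-- Iterated partial derivative `D^β K` (computed away from the origin),
for the multi-index given as a list `β : Fin k → Fin d` of coordinate directions. -/
def pderivB {d : ℕ} (k : ℕ) (β : Fin k → Fin d) (K : Euc d → ℝ) (x : Euc d) : ℝ :=
  iteratedFDerivWithin ℝ k K {(0 : Euc d)}ᶜ x fun i => EuclideanSpace.single (β i) 1

/-- The first `d-1` coordinates `x'` of a point `x ∈ ℝ^d`. -/
def projHyp {d : ℕ} (x : Euc d) : Euc (d - 1) :=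
  WithLp.toLp 2 (fun i => x ⟨(i : ℕ), lt_of_lt_of_le i.isLt (Nat.sub_le d 1)⟩)

/-- The last coordinate `x_d` of a point `x ∈ ℝ^d`. -/
def lastCoord {d : ℕ} (x : Euc d) : ℝ :=
  if h : 0 < d then x ⟨d - 1, Nat.sub_lt h one_pos⟩ else 0

/-- The point `(x', t) ∈ ℝ^d` with first coordinates `x' ∈ ℝ^{d-1}` and last coordinate `t`. -/
def withLast {d : ℕ} (x' : Euc (d - 1)) (t : ℝ) : Euc d :=
  WithLp.toLp 2 (fun i => if h : (i : ℕ) < d - 1 then x' ⟨(i : ℕ), h⟩ else t)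

/-- Graph window at a boundary point `a`: after the shift and rotation `x ↦ rot (x - a)`
(sending `a` to the origin), inside the open cube of side `R` centered at the origin the
domain `D` is exactly the region above the graph of `A`. -/
def GraphWindow {d : ℕ} (D : Set (Euc d)) (a : Euc d) (R : ℝ) (A : Euc (d - 1) → ℝ)
    (rot : Euc d ≃ₗᵢ[ℝ] Euc d) : Prop :=
  ∀ x : Euc d, (∀ i, |(rot (x - a)) i| < R / 2) →
    (x ∈ D ↔ A (projHyp (rot (x - a))) < lastCoord (rot (x - a)))

/-- `(δ, R)`-Lipschitz domain. -/
def IsLipschitzDomain (d : ℕ) (δ R : ℝ) (D : Set (Euc d)) : Prop :=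
  IsOpen D ∧ Bornology.IsBounded D ∧ 0 < R ∧
    ∀ a ∈ frontier D, ∃ (rot : Euc d ≃ₗᵢ[ℝ] Euc d) (A : Euc (d - 1) → ℝ),
      LipschitzWith (Real.toNNReal δ) A ∧ GraphWindow D a R A rot

/-- Bounded domain with `C^1`-smooth boundary. -/
def IsC1Domain (d : ℕ) (D : Set (Euc d)) : Prop :=
  IsOpen D ∧ Bornology.IsBounded D ∧
    ∀ a ∈ frontier D, ∃ (R : ℝ) (rot : Euc d ≃ₗᵢ[ℝ] Euc d) (A : Euc (d - 1) → ℝ),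
      0 < R ∧ ContDiff ℝ 1 A ∧ GraphWindow D a R A rot

/-- Bounded domain with `C^{1+α}`-smooth boundary: the local parametrizations are `C^1`
with `α`-Hölder continuous gradient. -/
def IsC1AlphaDomain (d : ℕ) (α : ℝ) (D : Set (Euc d)) : Prop :=
  IsOpen D ∧ Bornology.IsBounded D ∧
    ∀ a ∈ frontier D, ∃ (R : ℝ) (rot : Euc d ≃ₗᵢ[ℝ] Euc d) (A : Euc (d - 1) → ℝ) (M : ℝ),
      0 < R ∧ ContDiff ℝ 1 A ∧
      (∀ u v : Euc (d - 1), ‖fderiv ℝ A u - fderiv ℝ A v‖ ≤ M * ‖u - v‖ ^ α) ∧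
      GraphWindow D a R A rot

/-- `C^ω` domain for a growth function `ω` of type `n`: a Lipschitz domain whose local
parametrizations are approximated by polynomials of degree at most `n` with error `≲ ω(|x'|)`. -/
def IsCOmegaDomain (d : ℕ) (n : ℕ) (ω : ℝ → ℝ) (D : Set (Euc d)) : Prop :=
  IsOpen D ∧ Bornology.IsBounded D ∧
    ∃ δ R CD : ℝ, 0 < R ∧ 0 < CD ∧
      ∀ a ∈ frontier D, ∃ (rot : Euc d ≃ₗᵢ[ℝ] Euc d) (A : Euc (d - 1) → ℝ)
          (P : MvPolynomial (Fin (d - 1)) ℝ),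
        LipschitzWith (Real.toNNReal δ) A ∧ GraphWindow D a R A rot ∧
        P.totalDegree ≤ n ∧
        ∀ x' : Euc (d - 1), ‖x'‖ ≤ R →
          |A x' - MvPolynomial.eval (fun i => x' i) P| ≤ CD * ω ‖x'‖

/-- `ω(t)/t^q` is almost decreasing: `ω(st) ≤ C s^q ω(t)` for `s ≥ 1`. -/
def AlmostDecreasingExp (ω : ℝ → ℝ) (q : ℝ) : Prop :=
  ∃ C : ℝ, 0 < C ∧ ∀ s t : ℝ, 1 ≤ s → 0 < t → ω (s * t) ≤ C * s ^ q * ω t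

/-- `ω(t)/t^r` is almost increasing: `ω(st) ≤ C s^r ω(t)` for `0 < s ≤ 1`. -/
def AlmostIncreasingExp (ω : ℝ → ℝ) (r : ℝ) : Prop :=
  ∃ C : ℝ, 0 < C ∧ ∀ s t : ℝ, 0 < s → s ≤ 1 → 0 < t → ω (s * t) ≤ C * s ^ r * ω t

/-- Growth function of type `n`. -/
def IsGrowthFunctionOfType (n : ℕ) (ω : ℝ → ℝ) : Prop :=
  ContinuousOn ω (Set.Ici 0) ∧ MonotoneOn ω (Set.Ici 0) ∧ ω 0 = 0 ∧
  (∀ t, 0 ≤ t → 0 ≤ ω t) ∧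
  (∃ q : ℝ, (n : ℝ) < q ∧ q < n + 1 ∧ AlmostDecreasingExp ω q) ∧
  (∀ r : ℝ, r < n → AlmostIncreasingExp ω r)

/-- The closed axis-parallel cube with center `x₀` and side length `ℓ`. -/
def cube {d : ℕ} (x₀ : Euc d) (ℓ : ℝ) : Set (Euc d) := {x | ∀ i, |x i - x₀ i| ≤ ℓ / 2}

/-- `‖f‖_{ω,D} ≤ N`: on every axis-parallel cube `Q ⊆ D` of side `ℓ` there is a polynomial
of degree at most `n` approximating `f` within `N·ω(ℓ)` in the sup norm. -/
def ZygBound {d : ℕ} (n : ℕ) (ω : ℝ → ℝ) (D : Set (Euc d)) (f : Euc d → ℝ) (N : ℝ) : Prop :=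
  ∀ (x₀ : Euc d) (ℓ : ℝ), 0 < ℓ → cube x₀ ℓ ⊆ D →
    ∃ P : MvPolynomial (Fin d) ℝ, P.totalDegree ≤ n ∧
      ∀ x ∈ cube x₀ ℓ, |f x - MvPolynomial.eval (fun i => x i) P| ≤ N * ω ℓ

/-! The almost-decrease of `ω(t)/t^q` gives `ω t ≤ C (t/δ)^q ω δ` for `t ≥ δ`, which bounds the
integrand by a multiple of the power `t^(q-n-2)`; since `q < n+1` this power is integrable at
infinity, and its integral over `(δ, ∞)` is `δ^(q-n-1)/(n+1-q)`. -/

theorem setIntegral_Ioc_rpow_le {a b r : ℝ} (ha : 0 < a) (hr : r < -1) :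
    ∫ t in Ioc a b, t ^ r ≤ -a ^ (r + 1) / (r + 1) :=
  calc ∫ t in Ioc a b, t ^ r
      ≤ ∫ t in Ioi a, t ^ r :=
        setIntegral_mono_set (integrableOn_Ioi_rpow_of_lt hr ha)
          (ae_restrict_of_forall_mem measurableSet_Ioi fun _ ht =>
            Real.rpow_nonneg (ha.trans ht).le r)
          Ioc_subset_Ioi_self.eventuallyLE
    _ = -a ^ (r + 1) / (r + 1) := integral_Ioi_rpow_of_lt hr ha

theorem le_mul_rpow_div_of_almost_decreasing {ω : ℝ → ℝ} {C q δ t : ℝ}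
    (hdec : ∀ s t : ℝ, 1 ≤ s → 0 < t → ω (s * t) ≤ C * s ^ q * ω t) (hδ : 0 < δ) (hδt : δ ≤ t) :
    ω t ≤ C * (t / δ) ^ q * ω δ := by
  simpa only [div_mul_cancel₀ t hδ.ne'] using hdec (t / δ) δ ((one_le_div hδ).2 hδt) hδ

theorem setIntegral_Ioc_mul_rpow_le_of_almost_decreasing {ω : ℝ → ℝ} {C q p δ b : ℝ}
    (hω : ∀ t : ℝ, 0 < t → 0 ≤ ω t) (hC : 0 ≤ C)
    (hdec : ∀ s t : ℝ, 1 ≤ s → 0 < t → ω (s * t) ≤ C * s ^ q * ω t) (hqp : q < p) (hδ : 0 < δ) :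
    ∫ t in Ioc δ b, ω t * t ^ (-p - 1) ≤ C / (p - q) * ω δ * δ ^ (-p) := by
  set K := C * ω δ * δ ^ (-q) with hK_def
  have hK : 0 ≤ K := by have := hω δ hδ; positivity
  have hbound : ∀ t ∈ Ioc δ b, ω t * t ^ (-p - 1) ≤ K * t ^ (q - p - 1) := by
    intro t ht
    have htpos : 0 < t := hδ.trans ht.1
    calc ω t * t ^ (-p - 1)
        ≤ C * (t / δ) ^ q * ω δ * t ^ (-p - 1) := by
          gcongr
          exact le_mul_rpow_div_of_almost_decreasing hdec hδ ht.1.le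
      _ = K * t ^ (q - p - 1) := by
          rw [Real.div_rpow htpos.le hδ.le, div_eq_mul_inv, ← Real.rpow_neg hδ.le,
            show q - p - 1 = q + (-p - 1) by ring, Real.rpow_add htpos]
          ring
  have hr : q - p - 1 < -1 := by linarith
  calc ∫ t in Ioc δ b, ω t * t ^ (-p - 1)
      ≤ ∫ t in Ioc δ b, K * t ^ (q - p - 1) :=
        setIntegral_mono_of_nonneg
          (fun t ht => mul_nonneg (hω t (hδ.trans ht.1)) (Real.rpow_nonneg (hδ.trans ht.1).le _))
          hbound (((integrableOn_Ioi_rpow_of_lt hr hδ).mono_set Ioc_subset_Ioi_self).const_mul K)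
    _ = K * ∫ t in Ioc δ b, t ^ (q - p - 1) := integral_const_mul K _
    _ ≤ K * (-δ ^ (q - p - 1 + 1) / (q - p - 1 + 1)) := by
        gcongr; exact setIntegral_Ioc_rpow_le hδ hr
    _ = C / (p - q) * ω δ * δ ^ (-p) := by
        have hpq : p - q ≠ 0 := by linarith
        rw [show q - p - 1 + 1 = -(p - q) by ring, show -p = -q + -(p - q) by ring,
          Real.rpow_add hδ, hK_def]
        field_simp

theorem stmt18_general (n : ℕ) (ω : ℝ → ℝ)
    (hpos : ∀ t : ℝ, 0 < t → 0 < ω t)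
    (q : ℝ) (hq : q < n + 1) (Cq : ℝ)
    (hdec : ∀ s t : ℝ, 1 ≤ s → 0 < t → ω (s * t) ≤ Cq * s ^ q * ω t) :
    ∃ C' : ℝ, ∀ δ : ℝ, 0 < δ → δ < 1 →
      ∫ t in Set.Ioc δ 1, ω t / t ^ (n + 2) ≤ C' * ω δ / δ ^ (n + 1) := by
  have hCq : 0 ≤ Cq := by
    have h := hdec 1 1 le_rfl one_pos
    simp only [Real.one_rpow, mul_one] at h
    nlinarith [hpos 1 one_pos]
  refine ⟨Cq / ((n + 1 : ℝ) - q), fun δ hδ _ => ?_⟩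
  have hpow : ∀ t : ℝ, 0 < t → ∀ m : ℕ, (t ^ m)⁻¹ = t ^ (-(m : ℝ)) := fun t ht m => by
    rw [Real.rpow_neg ht.le, Real.rpow_natCast]
  calc ∫ t in Ioc δ 1, ω t / t ^ (n + 2)
      = ∫ t in Ioc δ 1, ω t * t ^ (-(n + 1 : ℝ) - 1) := by
        refine setIntegral_congr_fun measurableSet_Ioc fun t ht => ?_
        rw [div_eq_mul_inv, hpow t (hδ.trans ht.1)]
        push_cast; ring_nf
    _ ≤ Cq / ((n + 1 : ℝ) - q) * ω δ * δ ^ (-(n + 1 : ℝ)) :=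
        setIntegral_Ioc_mul_rpow_le_of_almost_decreasing (fun t ht => (hpos t ht).le) hCq hdec
          hq hδ
    _ = Cq / ((n + 1 : ℝ) - q) * ω δ / δ ^ (n + 1) := by
        rw [div_eq_mul_inv _ (δ ^ (n + 1)), hpow δ hδ]
        push_cast; ring_nf

/-- For an increasing `ω : (0,∞) → (0,∞)` with `ω(st) ≤ C_q s^q ω(t)`
for `s ≥ 1` and `q < n+1`: `∫_δ^1 ω(t) t^{−n−2} dt ≤ C' ω(δ) δ^{−n−1}`. -/
theorem stmt18 (n : ℕ) (ω : ℝ → ℝ)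
    (hpos : ∀ t : ℝ, 0 < t → 0 < ω t)
    (hmono : ∀ s t : ℝ, 0 < s → s ≤ t → ω s ≤ ω t)
    (q : ℝ) (hq : q < n + 1) (Cq : ℝ) (hCq : 0 < Cq)
    (hdec : ∀ s t : ℝ, 1 ≤ s → 0 < t → ω (s * t) ≤ Cq * s ^ q * ω t) :
    ∃ C' : ℝ, ∀ δ : ℝ, 0 < δ → δ < 1 →
      ∫ t in Set.Ioc δ 1, ω t / t ^ (n + 2) ≤ C' * ω δ / δ ^ (n + 1) :=
  stmt18_general n ω hpos q hq Cq hdec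

end
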